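/- The set of solutions (p2, p3, p4, p5, p10, p12, p41, p43, p45, p119) ∈ ℚ^10 with all coordinates nonzero of the system p41 = p10^3·p12, p43 = p10^2·p12^2, p45 = p10·p12^3, p119 = p41·p43·p10^2·p12^3, p119 = p10^12, p119 = p12^10, p119 = p2^60, p119 = p3^40, p119 = p4^30, p119 = p5^20 forms, under componentwise multiplication, a group of order exactly 32 in which every element squares to the identity; hence it is isomorphic to (ℤ/2ℤ)^5. -/
import Mathlib

namespace Stmt8Aux

/-- ±1 unit associated to a bit. -/
def u (a : ZMod 2) : ℚˣ := if a = 0 then 1 else -1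

lemma zmod2_cases : ∀ a : ZMod 2, a = 0 ∨ a = 1 := by decide

lemma one_ne_negone : (1 : ℚˣ) ≠ -1 := by
  intro h
  have := congrArg Units.val h
  norm_num at this

lemma u_add (a b : ZMod 2) : u (a + b) = u a * u b := by
  rcases zmod2_cases a with ha | ha <;> rcases zmod2_cases b with hb | hb <;>
      subst ha <;> subst hb
  · norm_num [u]
  · norm_num [u]
  · norm_num [u]
  · rw [(by decide : (1 : ZMod 2) + 1 = 0)]
    norm_num [u, (by decide : ¬(1 : ZMod 2) = 0)]

lemma u_inj : Function.Injective u := by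
  intro a b hab
  rcases zmod2_cases a with ha | ha <;> rcases zmod2_cases b with hb | hb <;>
      subst ha <;> subst hb
  · rfl
  · simp only [u, if_pos rfl, if_neg (by decide : ¬(1 : ZMod 2) = 0)] at hab
    exact (one_ne_negone hab).elim
  · simp only [u, if_pos rfl, if_neg (by decide : ¬(1 : ZMod 2) = 0)] at hab
    exact (one_ne_negone hab.symm).elim
  · rfl

@[simp] lemma u_zero : u 0 = 1 := rfl
@[simp] lemma u_one : u 1 = -1 := rfl

/-- The underlying function of the embedding. -/
def gfun (b : Fin 5 → ZMod 2) : Fin 10 → ℚˣ :=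
  ![u (b 0), u (b 1), u (b 2), u (b 3), 1, u (b 4), u (b 4), 1, u (b 4), 1]

@[simp] lemma gfun0 (b : Fin 5 → ZMod 2) : gfun b 0 = u (b 0) := rfl
@[simp] lemma gfun1 (b : Fin 5 → ZMod 2) : gfun b 1 = u (b 1) := rfl
@[simp] lemma gfun2 (b : Fin 5 → ZMod 2) : gfun b 2 = u (b 2) := rfl
@[simp] lemma gfun3 (b : Fin 5 → ZMod 2) : gfun b 3 = u (b 3) := rfl
@[simp] lemma gfun4 (b : Fin 5 → ZMod 2) : gfun b 4 = 1 := rfl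
@[simp] lemma gfun5 (b : Fin 5 → ZMod 2) : gfun b 5 = u (b 4) := rfl
@[simp] lemma gfun6 (b : Fin 5 → ZMod 2) : gfun b 6 = u (b 4) := rfl
@[simp] lemma gfun7 (b : Fin 5 → ZMod 2) : gfun b 7 = 1 := rfl
@[simp] lemma gfun8 (b : Fin 5 → ZMod 2) : gfun b 8 = u (b 4) := rfl
@[simp] lemma gfun9 (b : Fin 5 → ZMod 2) : gfun b 9 = 1 := rfl

/-- The embedding of `(ℤ/2)^5` into `(ℚˣ)^10`. -/
def g : Multiplicative (Fin 5 → ZMod 2) →* (Fin 10 → ℚˣ) where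
  toFun a := gfun (Multiplicative.toAdd a)
  map_one' := by
    funext i; fin_cases i <;>
      simp [u, (by decide : (Multiplicative.toAdd (1 : Multiplicative (Fin 5 → ZMod 2))) = 0), Pi.zero_apply]
  map_mul' a b := by
    funext i
    fin_cases i <;>
      simp [Pi.mul_apply, u_add]

lemma g_inj : Function.Injective g := by
  intro a b hab
  have h : ∀ i : Fin 10, gfun (Multiplicative.toAdd a) i = gfun (Multiplicative.toAdd b) i :=
    fun i => congrFun hab i
  have h0 := h 0
  have h1 := h 1
  have h2 := h 2
  have h3 := h 3
  have h5 := h 5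
  simp only [gfun0, gfun1, gfun2, gfun3, gfun5] at h0 h1 h2 h3 h5
  have : Multiplicative.toAdd a = Multiplicative.toAdd b := by
    funext i
    fin_cases i
    · exact u_inj h0
    · exact u_inj h1
    · exact u_inj h2
    · exact u_inj h3
    · exact u_inj h5
  exact Multiplicative.toAdd.injective this

lemma u_of_pm {x : ℚˣ} (h : (x : ℚ) = 1 ∨ (x : ℚ) = -1) :
    u (if (x : ℚ) = 1 then 0 else 1) = x := by
  rcases h with h | h
  · rw [if_pos h, u_zero]
    exact Units.ext (by rw [Units.val_one, h])
  · rw [if_neg (by rw [h]; norm_num), u_one]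
    exact Units.ext (by rw [Units.val_neg, Units.val_one, h])

lemma qu_pm (x : ℚ) {n : ℕ} (hn : n ≠ 0) (h : x ^ n = 1) : x = 1 ∨ x = -1 := by
  rcases pow_eq_one_iff_cases.mp h with h' | h' | h'
  · exact absurd h' hn
  · exact Or.inl h'
  · exact Or.inr h'.1

end Stmt8Aux

open Stmt8Aux in
/-- Remark 3.3, algebra (ΛU₃, δ₃): nonzero solutions (tuples `Fin 10 → ℚˣ`,
coordinates `p 0 = p2`, `p 1 = p3`, `p 2 = p4`, `p 3 = p5`, `p 4 = p10`, `p 5 = p12`, `p 6 = p41`, `p 7 = p43`, `p 8 = p45`, `p 9 = p119`)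
form a group of order 32 under componentwise multiplication in which every
element squares to the identity; hence it is isomorphic to (ℤ/2ℤ)^5. -/
theorem stmt_8 :
    ∃ H : Subgroup (Fin 10 → ℚˣ),
      (H : Set (Fin 10 → ℚˣ)) =
        {p : Fin 10 → ℚˣ | p 6 = p 4 ^ 3 * p 5 ∧
        p 7 = p 4 ^ 2 * p 5 ^ 2 ∧
        p 8 = p 4 * p 5 ^ 3 ∧
        p 9 = p 6 * p 7 * p 4 ^ 2 * p 5 ^ 3 ∧
        p 9 = p 4 ^ 12 ∧
        p 9 = p 5 ^ 10 ∧
        p 9 = p 0 ^ 60 ∧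
        p 9 = p 1 ^ 40 ∧
        p 9 = p 2 ^ 30 ∧
        p 9 = p 3 ^ 20} ∧
      Nat.card H = 32 ∧
      (∀ x ∈ H, x * x = 1) ∧
      Nonempty (H ≃* Multiplicative (Fin 5 → ZMod 2)) := by
  refine ⟨g.range, ?_, ?_, ?_, ⟨(MonoidHom.ofInjective g_inj).symm⟩⟩
  · ext p
    simp only [MonoidHom.coe_range, Set.mem_range, Set.mem_setOf_eq]
    constructor
    · rintro ⟨a, rfl⟩
      have gap : ∀ i, g a i = gfun (Multiplicative.toAdd a) i := fun _ => rfl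
      set b := Multiplicative.toAdd a with hb
      refine ⟨?_, ?_, ?_, ?_, ?_, ?_, ?_, ?_, ?_, ?_⟩ <;>
        simp only [gap, gfun0, gfun1, gfun2, gfun3, gfun4, gfun5, gfun6, gfun7, gfun8, gfun9] <;>
        rcases zmod2_cases (b 0) with h0 | h0 <;>
        rcases zmod2_cases (b 1) with h1 | h1 <;>
        rcases zmod2_cases (b 2) with h2 | h2 <;>
        rcases zmod2_cases (b 3) with h3 | h3 <;>
        rcases zmod2_cases (b 4) with h4 | h4 <;>
        (try simp only [h0, h1, h2, h3, h4, u_zero, u_one]) <;>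
        apply Units.ext <;>
        push_cast <;>
        norm_num
    · intro hp
      obtain ⟨h1, h2, h3, h4, h5, h6, h7, h8, h9, h10⟩ := hp
      have cv : ∀ (x y : ℚˣ), x = y → (x : ℚ) = (y : ℚ) := fun x y h => by rw [h]
      set a : ℚ := (p 4 : ℚ) with ha
      set c : ℚ := (p 5 : ℚ) with hc
      have ha0 : a ≠ 0 := Units.ne_zero _
      have hc0 : c ≠ 0 := Units.ne_zero _
      -- pass the equations to ℚ
      have E1 : ((p 6 : ℚ)) = a ^ 3 * c := by have := cv _ _ h1; push_cast at this; exact this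
      have E2 : ((p 7 : ℚ)) = a ^ 2 * c ^ 2 := by have := cv _ _ h2; push_cast at this; exact this
      have E3 : ((p 8 : ℚ)) = a * c ^ 3 := by have := cv _ _ h3; push_cast at this; exact this
      have E4 : ((p 9 : ℚ)) = a ^ 7 * c ^ 6 := by
        have := cv _ _ h4; push_cast at this
        rw [this, E1, E2]; ring
      have E5 : ((p 9 : ℚ)) = a ^ 12 := by have := cv _ _ h5; push_cast at this; exact this
      have E6 : ((p 9 : ℚ)) = c ^ 10 := by have := cv _ _ h6; push_cast at this; exact this
      -- a^5 = c^6
      have ea : a ^ 5 = c ^ 6 := by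
        have h : a ^ 7 * a ^ 5 = a ^ 7 * c ^ 6 := by
          rw [show a ^ 7 * a ^ 5 = a ^ 12 by ring, ← E5, E4]
        exact mul_left_cancel₀ (pow_ne_zero 7 ha0) h
      have ea2 : a ^ 12 = c ^ 10 := by rw [← E5, E6]
      have ha22 : a ^ 22 = 1 := by
        have h60 : a ^ 50 = c ^ 60 := by
          calc a ^ 50 = (a ^ 5) ^ 10 := by ring
            _ = (c ^ 6) ^ 10 := by rw [ea]
            _ = c ^ 60 := by ring
        have h60' : a ^ 72 = c ^ 60 := by
          calc a ^ 72 = (a ^ 12) ^ 6 := by ring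
            _ = (c ^ 10) ^ 6 := by rw [ea2]
            _ = c ^ 60 := by ring
        have h : a ^ 50 * a ^ 22 = a ^ 50 * 1 := by
          rw [mul_one]
          calc a ^ 50 * a ^ 22 = a ^ 72 := by ring
            _ = c ^ 60 := h60'
            _ = a ^ 50 := h60.symm
        exact mul_left_cancel₀ (pow_ne_zero 50 ha0) h
      have hA : a = 1 := by
        rcases qu_pm a (by norm_num : (22:ℕ) ≠ 0) ha22 with h | h
        · exact h
        · exfalso
          have : c ^ 6 = -1 := by rw [← ea, h]; norm_num
          nlinarith [sq_nonneg (c ^ 3)]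
      have hc6 : c ^ 6 = 1 := by rw [← ea, hA]; norm_num
      have hC : c = 1 ∨ c = -1 := qu_pm c (by norm_num) hc6
      have hc2 : c ^ 2 = 1 := by rcases hC with h | h <;> rw [h] <;> norm_num
      have hQ9 : ((p 9 : ℚ)) = 1 := by rw [E5, hA]; norm_num
      have hP0 : ((p 0 : ℚ)) = 1 ∨ ((p 0 : ℚ)) = -1 := by
        apply qu_pm _ (by norm_num : (60:ℕ) ≠ 0)
        have := cv _ _ h7; push_cast at this; rw [← this, hQ9]
      have hP1 : ((p 1 : ℚ)) = 1 ∨ ((p 1 : ℚ)) = -1 := by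
        apply qu_pm _ (by norm_num : (40:ℕ) ≠ 0)
        have := cv _ _ h8; push_cast at this; rw [← this, hQ9]
      have hP2 : ((p 2 : ℚ)) = 1 ∨ ((p 2 : ℚ)) = -1 := by
        apply qu_pm _ (by norm_num : (30:ℕ) ≠ 0)
        have := cv _ _ h9; push_cast at this; rw [← this, hQ9]
      have hP3 : ((p 3 : ℚ)) = 1 ∨ ((p 3 : ℚ)) = -1 := by
        apply qu_pm _ (by norm_num : (20:ℕ) ≠ 0)
        have := cv _ _ h10; push_cast at this; rw [← this, hQ9]
      -- the codomain values p6, p7, p8 in ℚ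
      have E6' : ((p 6 : ℚ)) = c := by rw [E1, hA]; ring
      have E7' : ((p 7 : ℚ)) = 1 := by rw [E2, hA]; simpa using hc2
      have E8' : ((p 8 : ℚ)) = c := by
        rw [E3, hA, one_mul, pow_succ, hc2, one_mul]
      refine ⟨Multiplicative.ofAdd
        ![if ((p 0 : ℚ)) = 1 then 0 else 1,
          if ((p 1 : ℚ)) = 1 then 0 else 1,
          if ((p 2 : ℚ)) = 1 then 0 else 1,
          if ((p 3 : ℚ)) = 1 then 0 else 1,
          if c = 1 then 0 else 1], ?_⟩
      funext i
      fin_cases i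
      · exact u_of_pm hP0
      · exact u_of_pm hP1
      · exact u_of_pm hP2
      · exact u_of_pm hP3
      · refine Units.ext ?_
        show ((1 : ℚˣ) : ℚ) = ((p 4 : ℚˣ) : ℚ)
        rw [Units.val_one]; exact (ha.symm.trans hA).symm
      · exact u_of_pm (hc ▸ hC)
      · have hp65 : p 6 = p 5 := Units.ext (by rw [E6', hc])
        rw [show (p : Fin 10 → ℚˣ) ⟨6, by norm_num⟩ = p 6 from rfl, hp65]
        exact u_of_pm (hc ▸ hC)
      · refine Units.ext ?_
        show ((1 : ℚˣ) : ℚ) = ((p 7 : ℚˣ) : ℚ)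
        rw [Units.val_one]; exact E7'.symm
      · have hp85 : p 8 = p 5 := Units.ext (by rw [E8', hc])
        rw [show (p : Fin 10 → ℚˣ) ⟨8, by norm_num⟩ = p 8 from rfl, hp85]
        exact u_of_pm (hc ▸ hC)
      · refine Units.ext ?_
        show ((1 : ℚˣ) : ℚ) = ((p 9 : ℚˣ) : ℚ)
        rw [Units.val_one]; exact hQ9.symm
  · -- cardinality
    have : Nat.card g.range = Nat.card (Multiplicative (Fin 5 → ZMod 2)) :=
      Nat.card_congr (MonoidHom.ofInjective g_inj).symm.toEquiv
    rw [this]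
    simp [Nat.card_eq_fintype_card]
  · rintro x ⟨a, rfl⟩
    rw [← map_mul]
    have : a * a = 1 := by
      apply Multiplicative.toAdd.injective
      funext i
      show Multiplicative.toAdd a i + Multiplicative.toAdd a i = 0
      exact CharTwo.add_self_eq_zero _
    rw [this, map_one]
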